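/- (Non-uniform scale transformation of points.) Let v, p ∈ EuclideanSpace ℝ (Fin 3) with v ≠ 0, let D := E(v)∘E*(v) − E*(v)∘E(v), let t ∈ ℝ and θ := t‖v‖²/2, and set Ψ := cosh(θ)•id + (sinh(θ)/‖v‖²)•D and Ψ' := cosh(θ)•id − (sinh(θ)/‖v‖²)•D. Writing p∥ := (⟨p,v⟩/‖v‖²)•v and p⊥ := p − p∥, we have Ψ ∘ (id + E(p)) ∘ Ψ' = id + E(p⊥) + Real.exp(t‖v‖²) • E(p∥). (Since D² = ‖v‖⁴•id, Ψ = e^{tD/2} and Ψ' = e^{−tD/2} is its reversion, so this is the transformation e^{t[v,v*]/2} P (e^{t[v,v*]/2})~ of the paper: it fixes the weight of the point and scales the component of its location along v by e^{t‖v‖²}.) -/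

import Mathlib

open scoped RealInnerProductSpace

noncomputable section

/-- Left exterior multiplication by a vector on the exterior algebra of `ℝ³`. -/
def wedgeOp (v : EuclideanSpace ℝ (Fin 3)) :
    ExteriorAlgebra ℝ (EuclideanSpace ℝ (Fin 3)) →ₗ[ℝ]
      ExteriorAlgebra ℝ (EuclideanSpace ℝ (Fin 3)) :=
  LinearMap.mulLeft ℝ (ExteriorAlgebra.ι ℝ v)

/-- Left contraction (interior product) along the functional `⟪v, ·⟫`. -/
def contrOp (v : EuclideanSpace ℝ (Fin 3)) :
    ExteriorAlgebra ℝ (EuclideanSpace ℝ (Fin 3)) →ₗ[ℝ]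
      ExteriorAlgebra ℝ (EuclideanSpace ℝ (Fin 3)) :=
  CliffordAlgebra.contractLeft (innerₗ (EuclideanSpace ℝ (Fin 3)) v)

/-!
With `E = E(v)` and `C = E*(v)` one has `E² = C² = 0` and `CE + EC = ‖v‖²`, so
`D = EC − CE` satisfies `D² = ‖v‖⁴`, `DE = ‖v‖² E`, `ED = −‖v‖² E`, and `D` commutes with
`E(q)` for `q ⊥ v`. Hence `Ψ(θ) = cosh θ + (sinh θ / ‖v‖²) D` behaves like `exp (θ D / ‖v‖²)`:
`Ψ(θ) Ψ(−θ) = 1`, conjugation by it fixes `1` and `E(p⊥)`, and it multiplies `E(v)` by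
`e^θ` on each side, i.e. by `e^{2θ} = e^{t‖v‖²}` in total.
-/

section AnticommutingPair

variable {A : Type*} [Ring A] {e c : A}

theorem commute_commutator_of_anticomm {q : A} (heq : e * q + q * e = 0)
    (hcq : c * q + q * c = 0) : Commute (e * c - c * e) q := by
  refine sub_eq_zero.mp ?_
  calc (e * c - c * e) * q - q * (e * c - c * e)
      = e * (c * q + q * c) - c * (e * q + q * e) - (e * q + q * e) * c
          + (c * q + q * c) * e := by noncomm_ring
    _ = 0 := by rw [heq, hcq]; simp

variable {R : Type*} [CommRing R] [Algebra R A] {n : R}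

theorem mul_mul_self_eq_smul_of_anticomm (he : e * e = 0) (hce : c * e + e * c = n • 1) :
    e * c * e = n • e := by
  have hce' : c * e = n • 1 - e * c := eq_sub_of_add_eq hce
  rw [mul_assoc, hce', mul_sub, mul_smul_comm, mul_one, ← mul_assoc, he, zero_mul, sub_zero]

theorem commutator_mul_eq_smul_of_anticomm (he : e * e = 0) (hce : c * e + e * c = n • 1) :
    (e * c - c * e) * e = n • e := by
  rw [sub_mul, mul_mul_self_eq_smul_of_anticomm he hce, mul_assoc, he, mul_zero, sub_zero]

theorem mul_commutator_eq_neg_smul_of_anticomm (he : e * e = 0) (hce : c * e + e * c = n • 1) :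
    e * (e * c - c * e) = -(n • e) := by
  rw [mul_sub, ← mul_assoc, he, zero_mul, ← mul_assoc,
    mul_mul_self_eq_smul_of_anticomm he hce, zero_sub]

theorem commutator_mul_self_eq_smul_of_anticomm (he : e * e = 0) (hc : c * c = 0)
    (hce : c * e + e * c = n • 1) :
    (e * c - c * e) * (e * c - c * e) = (n * n) • 1 := by
  have hece := mul_mul_self_eq_smul_of_anticomm he hce
  calc (e * c - c * e) * (e * c - c * e)
      = e * c * e * c - e * (c * c) * e - c * (e * e) * c + c * (e * c * e) := by noncomm_ring
    _ = n • (c * e + e * c) := by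
        rw [hece, hc, he, mul_zero, zero_mul, mul_zero, zero_mul, smul_mul_assoc,
          mul_smul_comm, smul_add]
        abel
    _ = (n * n) • 1 := by rw [hce, smul_smul]

end AnticommutingPair

section HypRotor

variable {A : Type*} [Ring A] [Algebra ℝ A]

def hypRotor (n θ : ℝ) (d : A) : A :=
  Real.cosh θ • 1 + (Real.sinh θ / n) • d

variable {n : ℝ} {d : A}

theorem hypRotor_zero : hypRotor n 0 d = 1 := by
  simp [hypRotor]

theorem hypRotor_neg (θ : ℝ) :
    hypRotor n (-θ) d = Real.cosh θ • 1 - (Real.sinh θ / n) • d := by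
  simp [hypRotor, neg_div, sub_eq_add_neg]

theorem hypRotor_mul_hypRotor (hn : n ≠ 0) (hd : d * d = (n * n) • 1) (θ φ : ℝ) :
    hypRotor n θ d * hypRotor n φ d = hypRotor n (θ + φ) d := by
  have hsq : Real.sinh θ / n * (Real.sinh φ / n) * (n * n) = Real.sinh θ * Real.sinh φ := by
    field_simp
  simp only [hypRotor, add_mul, mul_add, smul_mul_smul_comm, one_mul, mul_one, hd, smul_smul,
    hsq, Real.cosh_add, Real.sinh_add]
  module

theorem hypRotor_mul_of_mul_eq_smul (hn : n ≠ 0) {x : A} (hx : d * x = n • x) (θ : ℝ) :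
    hypRotor n θ d * x = Real.exp θ • x := by
  rw [hypRotor, add_mul, smul_mul_assoc, smul_mul_assoc, one_mul, hx, smul_smul,
    div_mul_cancel₀ _ hn, ← add_smul, Real.cosh_add_sinh]

theorem mul_hypRotor_of_mul_eq_neg_smul (hn : n ≠ 0) {x : A} (hx : x * d = -(n • x)) (θ : ℝ) :
    x * hypRotor n θ d = Real.exp (-θ) • x := by
  rw [hypRotor, mul_add, mul_smul_comm, mul_smul_comm, mul_one, hx, smul_neg, smul_smul,
    div_mul_cancel₀ _ hn, ← sub_eq_add_neg, ← sub_smul, ← Real.cosh_sub_sinh]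

theorem Commute.hypRotor_left {q : A} (h : Commute d q) (θ : ℝ) :
    Commute (hypRotor n θ d) q :=
  ((Commute.one_left q).smul_left _).add_left (h.smul_left _)

theorem hypRotor_conj (hn : n ≠ 0) (hd : d * d = (n * n) • 1) {q x : A} (hq : Commute d q)
    (hx : d * x = n • x) (hx' : x * d = -(n • x)) (θ : ℝ) :
    hypRotor n θ d * (1 + q + x) * hypRotor n (-θ) d = 1 + q + Real.exp (2 * θ) • x := by
  have hinv : hypRotor n θ d * hypRotor n (-θ) d = 1 := by
    rw [hypRotor_mul_hypRotor hn hd, add_neg_cancel, hypRotor_zero]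
  have hconj_q : hypRotor n θ d * q * hypRotor n (-θ) d = q := by
    rw [(hq.hypRotor_left θ).eq, mul_assoc, hinv, mul_one]
  have hconj_x : hypRotor n θ d * x * hypRotor n (-θ) d = Real.exp (2 * θ) • x := by
    rw [hypRotor_mul_of_mul_eq_smul hn hx, smul_mul_assoc,
      mul_hypRotor_of_mul_eq_neg_smul hn hx', neg_neg, smul_smul, ← Real.exp_add, two_mul]
  rw [mul_add, mul_add, mul_one, add_mul, add_mul, hinv, hconj_q, hconj_x]

end HypRotor

theorem wedgeOp_add (u w : EuclideanSpace ℝ (Fin 3)) :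
    wedgeOp (u + w) = wedgeOp u + wedgeOp w := by
  ext x
  simp [wedgeOp, add_mul]

theorem wedgeOp_smul (a : ℝ) (u : EuclideanSpace ℝ (Fin 3)) :
    wedgeOp (a • u) = a • wedgeOp u := by
  ext x
  simp [wedgeOp]

theorem wedgeOp_mul_self (u : EuclideanSpace ℝ (Fin 3)) : wedgeOp u * wedgeOp u = 0 := by
  rw [wedgeOp, Module.End.mul_eq_comp, ← LinearMap.mulLeft_mul, ExteriorAlgebra.ι_sq_zero,
    LinearMap.mulLeft_zero_eq_zero]

theorem wedgeOp_mul_add_mul_swap (u w : EuclideanSpace ℝ (Fin 3)) :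
    wedgeOp u * wedgeOp w + wedgeOp w * wedgeOp u = 0 := by
  ext x
  simp [wedgeOp, ← mul_assoc, ← add_mul, ExteriorAlgebra.ι_add_mul_swap]

theorem contrOp_mul_self (v : EuclideanSpace ℝ (Fin 3)) : contrOp v * contrOp v = 0 :=
  LinearMap.ext (CliffordAlgebra.contractLeft_contractLeft _)

theorem contrOp_mul_wedgeOp_add (v u : EuclideanSpace ℝ (Fin 3)) :
    contrOp v * wedgeOp u + wedgeOp u * contrOp v = ⟪v, u⟫ • 1 := by
  ext x
  simp [contrOp, wedgeOp, CliffordAlgebra.contractLeft_ι_mul]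

/-- non-uniform scale transformation of points, generated by
`D = E(v)∘E*(v) − E*(v)∘E(v)`. -/
theorem scale_of_point (v p : EuclideanSpace ℝ (Fin 3)) (hv : v ≠ 0) (t : ℝ) :
    (Real.cosh (t * ‖v‖ ^ 2 / 2) • LinearMap.id +
          (Real.sinh (t * ‖v‖ ^ 2 / 2) / ‖v‖ ^ 2) •
            (wedgeOp v ∘ₗ contrOp v - contrOp v ∘ₗ wedgeOp v)) ∘ₗ
        (LinearMap.id + wedgeOp p) ∘ₗ
        (Real.cosh (t * ‖v‖ ^ 2 / 2) • LinearMap.id -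
          (Real.sinh (t * ‖v‖ ^ 2 / 2) / ‖v‖ ^ 2) •
            (wedgeOp v ∘ₗ contrOp v - contrOp v ∘ₗ wedgeOp v))
      = LinearMap.id + wedgeOp (p - (⟪p, v⟫ / ‖v‖ ^ 2) • v) +
          Real.exp (t * ‖v‖ ^ 2) • wedgeOp ((⟪p, v⟫ / ‖v‖ ^ 2) • v) := by
  simp only [← Module.End.one_eq_id, ← Module.End.mul_eq_comp]
  set n := ‖v‖ ^ 2
  set a := ⟪p, v⟫ / n
  have hn : n ≠ 0 := pow_ne_zero 2 (norm_ne_zero_iff.mpr hv)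
  have hvv : contrOp v * wedgeOp v + wedgeOp v * contrOp v = n • 1 := by
    rw [contrOp_mul_wedgeOp_add, real_inner_self_eq_norm_sq]
  have hvq : ⟪v, p - a • v⟫ = 0 := by
    rw [inner_sub_right, inner_smul_right, real_inner_self_eq_norm_sq, real_inner_comm,
      div_mul_cancel₀ _ hn, sub_self]
  have hE := wedgeOp_mul_self v
  have hd := commutator_mul_self_eq_smul_of_anticomm hE (contrOp_mul_self v) hvv
  have hq : Commute (wedgeOp v * contrOp v - contrOp v * wedgeOp v) (wedgeOp (p - a • v)) :=
    commute_commutator_of_anticomm (wedgeOp_mul_add_mul_swap v _)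
      (by rw [contrOp_mul_wedgeOp_add, hvq, zero_smul])
  have hx : (wedgeOp v * contrOp v - contrOp v * wedgeOp v) * (a • wedgeOp v) =
      n • (a • wedgeOp v) := by
    rw [mul_smul_comm, commutator_mul_eq_smul_of_anticomm hE hvv, smul_comm]
  have hx' : (a • wedgeOp v) * (wedgeOp v * contrOp v - contrOp v * wedgeOp v) =
      -(n • (a • wedgeOp v)) := by
    rw [smul_mul_assoc, mul_commutator_eq_neg_smul_of_anticomm hE hvv, smul_neg, smul_comm]
  have hp : 1 + wedgeOp p = 1 + wedgeOp (p - a • v) + a • wedgeOp v := by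
    rw [add_assoc, ← wedgeOp_smul, ← wedgeOp_add, sub_add_cancel]
  have hconj := hypRotor_conj hn hd hq hx hx' (t * n / 2)
  rw [hypRotor_neg, hypRotor, mul_div_cancel₀ _ two_ne_zero] at hconj
  rwa [hp, wedgeOp_smul, ← mul_assoc]

end
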